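/- Let T be a tree with diameter 3 and central vertices x and y (the two adjacent non-pendant vertices). If S is a proper convex set of TT̄ with both S ∩ V(T) and S ∩ V(T̄) nonempty, then S ∩ V(T) is contained in N_T[x] or in N_T[y]; in particular |S ∩ V(T)| ≤ Δ(T) + 1. -/

import Mathlib

open SimpleGraph

/-- Adjacency of the complementary prism: copies of `G` and `Gᶜ` joined by a perfect matching. -/
def prismAdj {V : Type*} (G : SimpleGraph V) : V ⊕ V → V ⊕ V → Prop
  | Sum.inl a, Sum.inl b => G.Adj a b
  | Sum.inr a, Sum.inr b => Gᶜ.Adj a b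
  | Sum.inl a, Sum.inr b => a = b
  | Sum.inr a, Sum.inl b => a = b

/-- The complementary prism `G G̅` of a graph `G`. -/
def compPrism {V : Type*} (G : SimpleGraph V) : SimpleGraph (V ⊕ V) where
  Adj := prismAdj G
  symm := by
    constructor
    rintro (a | a) (b | b) h
    · exact h.symm
    · exact h.symm
    · exact h.symm
    · exact h.symm
  loopless := by
    constructor
    rintro (a | a) h
    · exact G.loopless.irrefl a h
    · exact Gᶜ.loopless.irrefl a h

/-- `w` lies on some shortest `u,v`-path (geodesic) of `H`. -/
def inInterval {V : Type*} (H : SimpleGraph V) (u v w : V) : Prop :=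
  ∃ p : H.Walk u v, p.IsPath ∧ p.length = H.dist u v ∧ w ∈ p.support

/-- A set of vertices is geodesically convex. -/
def IsGeoConvex {V : Type*} (H : SimpleGraph V) (S : Set V) : Prop :=
  ∀ u ∈ S, ∀ v ∈ S, ∀ w, inInterval H u v w → w ∈ S

/-- The geodesic convex hull: the smallest convex set containing `S`. -/
def geoHull {V : Type*} (H : SimpleGraph V) (S : Set V) : Set V :=
  ⋂₀ {C | IsGeoConvex H C ∧ S ⊆ C}

/-- The convexity number: maximum cardinality of a proper convex set. -/
noncomputable def convexityNumber {V : Type*} (H : SimpleGraph V) : ℕ :=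
  sSup {n | ∃ S : Set V, IsGeoConvex H S ∧ S ≠ Set.univ ∧ S.ncard = n}

/-- The diameter of a graph. -/
noncomputable def graphDiam {V : Type*} (H : SimpleGraph V) : ℕ :=
  sSup {d | ∃ u v : V, H.dist u v = d}

/-- The eccentricity of a vertex. -/
noncomputable def graphEcc {V : Type*} (H : SimpleGraph V) (u : V) : ℕ :=
  sSup {d | ∃ v : V, H.dist u v = d}

/-- The degree of a vertex. -/
noncomputable def vdeg {V : Type*} (H : SimpleGraph V) (v : V) : ℕ :=
  (H.neighborSet v).ncard

/-- The maximum degree. -/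
noncomputable def maxDeg {V : Type*} (H : SimpleGraph V) : ℕ :=
  sSup {d | ∃ v : V, vdeg H v = d}

/-- The number of pendant neighbours of a vertex. -/
noncomputable def pendCount {V : Type*} (H : SimpleGraph V) (w : V) : ℕ :=
  {v ∈ H.neighborSet w | vdeg H v = 1}.ncard

/-!
A tree of diameter 3 with central edge `xy` is a double star: every other vertex is a leaf at `x`
or at `y`, since a path of length 3 cannot be extended at either end. Suppose a convex set `S` of
the complementary prism contains a leaf `u` at `x` and a leaf `v` at `y`. Then `u` and `v` are at
distance 3, with geodesics `u x y v` and `u ū v̄ v`, so `x, y, ū, v̄ ∈ S`. Geodesics of length two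
then add `x̄` (on `x x̄ v̄`), `ȳ`, every `z̄` for a leaf `z` at `x` (on `ȳ z̄ v̄`) and finally `z`
itself (on `x z z̄`); symmetrically for the leaves at `y`. So `S` is the whole vertex set.
-/

namespace SimpleGraph

variable {V : Type*} {G : SimpleGraph V}

theorem IsAcyclic.dist_eq_length_of_isPath (hG : G.IsAcyclic) {u v : V} {p : G.Walk u v}
    (hp : p.IsPath) : G.dist u v = p.length := by
  obtain ⟨q, hq, hqd⟩ := p.reachable.exists_path_of_dist
  rw [← hqd, Subtype.mk.inj <| (hG.subsingleton_path u v).elim ⟨q, hq⟩ ⟨p, hp⟩]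

theorem IsAcyclic.eq_snd_of_adj_of_dist_le (hG : G.IsAcyclic) {u v w : V} {p : G.Walk u v}
    (hp : p.IsPath) (hdist : ∀ a b, G.dist a b ≤ p.length) (hw : G.Adj u w) : w = p.snd := by
  by_contra hne
  have hext : (Walk.cons hw.symm p).IsPath :=
    (Walk.cons_isPath_iff _ _).mpr ⟨hp, fun hs ↦ hne (hG.eq_snd_of_adj_start hp hw hs)⟩
  have := hdist w v
  rw [hG.dist_eq_length_of_isPath hext, Walk.length_cons] at this
  omega

theorem IsAcyclic.neighborSet_eq_singleton_of_dist_le_three (hG : G.IsAcyclic)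
    (hdist : ∀ a b, G.dist a b ≤ 3) {x y y' z : V} (hxy : G.Adj x y) (hyy' : G.Adj y y')
    (hy'x : y' ≠ x) (hzx : G.Adj z x) (hzy : z ≠ y) : G.neighborSet z = {x} := by
  let p : G.Walk z y' := .cons hzx (.cons hxy hyy'.toWalk)
  have hp : p.IsPath := by
    simp [p, hG.isPath_iff_isChain, hzx.ne, hxy.ne, hzy, hy'x.symm]
  ext w
  exact ⟨fun hw ↦ hG.eq_snd_of_adj_of_dist_le hp hdist hw, fun hw ↦ hw ▸ hzx⟩

theorem eq_of_adj_of_neighborSet_eq_singleton {x z w : V} (h : G.neighborSet z = {x})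
    (hw : G.Adj z w) : w = x := by
  rw [← Set.mem_singleton_iff, ← h]
  exact hw

theorem adj_of_neighborSet_eq_singleton {x z : V} (h : G.neighborSet z = {x}) : G.Adj z x := by
  rw [← mem_neighborSet, h]
  rfl

def IsDoubleStar (G : SimpleGraph V) (x y : V) : Prop :=
  G.Adj x y ∧ ∀ z, z = x ∨ z = y ∨ G.neighborSet z = {x} ∨ G.neighborSet z = {y}

theorem IsDoubleStar.symm {x y : V} (h : G.IsDoubleStar x y) : G.IsDoubleStar y x :=
  ⟨h.1.symm, fun z ↦ by rcases h.2 z with h | h | h | h <;> simp [h]⟩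

theorem IsTree.isDoubleStar (hG : G.IsTree) (hdist : ∀ a b, G.dist a b ≤ 3) {x y x' y' : V}
    (hxy : G.Adj x y) (hxx' : G.Adj x x') (hx'y : x' ≠ y) (hyy' : G.Adj y y') (hy'x : y' ≠ x) :
    G.IsDoubleStar x y := by
  refine ⟨hxy, fun z ↦ ?_⟩
  induction (reachable_iff_reflTransGen x z).mp (hG.connected x z) with
  | refl => exact .inl rfl
  | @tail a b _ hab ih =>
    rcases ih with rfl | rfl | ha | ha
    · by_cases hby : b = y
      · exact .inr (.inl hby)
      · exact .inr (.inr (.inl (hG.isAcyclic.neighborSet_eq_singleton_of_dist_le_three hdist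
          hxy hyy' hy'x hab.symm hby)))
    · by_cases hbx : b = x
      · exact .inl hbx
      · exact .inr (.inr (.inr (hG.isAcyclic.neighborSet_eq_singleton_of_dist_le_three hdist
          hxy.symm hxx' hx'y hab.symm hbx)))
    · exact .inl (eq_of_adj_of_neighborSet_eq_singleton ha hab)
    · exact .inr (.inl (eq_of_adj_of_neighborSet_eq_singleton ha hab))

end SimpleGraph

open SimpleGraph

section Convex

variable {W : Type*} {H : SimpleGraph W} {S : Set W}

theorem IsGeoConvex.mem_of_mem_support (hS : IsGeoConvex H S) {a b c : W} (ha : a ∈ S)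
    (hb : b ∈ S) (p : H.Walk a b) (hp : p.length = H.dist a b) (hc : c ∈ p.support) : c ∈ S :=
  hS a ha b hb c ⟨p, p.isPath_of_length_eq_dist hp, hp, hc⟩

theorem IsGeoConvex.mem_of_adj_of_adj (hS : IsGeoConvex H S) {a b c : W} (ha : a ∈ S)
    (hb : b ∈ S) (hac : H.Adj a c) (hcb : H.Adj c b) (hab : a ≠ b) (hnab : ¬H.Adj a b) :
    c ∈ S := by
  let p : H.Walk a b := .cons hac hcb.toWalk
  have hdist : H.dist a b = 2 := by
    have h := edist_eq_two_iff.mpr ⟨hab, hnab, ⟨c, H.mem_commonNeighbors.mpr ⟨hac, hcb.symm⟩⟩⟩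
    exact_mod_cast p.reachable.coe_dist_eq_edist.trans h
  exact hS.mem_of_mem_support ha hb p (by simp [p, hdist]) (by simp [p])

theorem IsGeoConvex.mem_of_adj_of_adj_of_adj (hS : IsGeoConvex H S) {a b c d : W} (ha : a ∈ S)
    (hb : b ∈ S) (hac : H.Adj a c) (hcd : H.Adj c d) (hdb : H.Adj d b) (hab : a ≠ b)
    (hnab : ¬H.Adj a b) (hcommon : H.commonNeighbors a b = ∅) : c ∈ S ∧ d ∈ S := by
  let p : H.Walk a b := .cons hac (.cons hcd hdb.toWalk)
  have hdist : H.dist a b = 3 := by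
    have hlt := two_lt_edist_iff.mpr ⟨hab, hnab, hcommon⟩
    have hle : H.edist a b ≤ 3 := by simpa [p] using p.edist_le
    rw [← p.reachable.coe_dist_eq_edist] at hlt hle
    norm_cast at hlt hle
    omega
  have hp : p.length = H.dist a b := by simp [p, hdist]
  exact ⟨hS.mem_of_mem_support ha hb p hp (by simp [p]),
    hS.mem_of_mem_support ha hb p hp (by simp [p])⟩

end Convex

section Prism

variable {V : Type*} {T : SimpleGraph V} {S : Set (V ⊕ V)}

@[simp]
theorem compPrism_adj_inl_inl {a b : V} :
    (compPrism T).Adj (.inl a) (.inl b) ↔ T.Adj a b := Iff.rfl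

@[simp]
theorem compPrism_adj_inr_inr {a b : V} :
    (compPrism T).Adj (.inr a) (.inr b) ↔ a ≠ b ∧ ¬T.Adj a b := compl_adj T a b

@[simp]
theorem compPrism_adj_inl_inr {a b : V} : (compPrism T).Adj (.inl a) (.inr b) ↔ a = b := Iff.rfl

@[simp]
theorem compPrism_adj_inr_inl {a b : V} : (compPrism T).Adj (.inr a) (.inl b) ↔ a = b := Iff.rfl

theorem IsGeoConvex.inr_mem_of_inl_mem_of_inr_mem (hS : IsGeoConvex (compPrism T) S) {a b : V}
    (ha : .inl a ∈ S) (hb : .inr b ∈ S) (hab : a ≠ b) (hnab : ¬T.Adj a b) : .inr a ∈ S :=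
  hS.mem_of_adj_of_adj ha hb (by simp) (by simp [hab, hnab]) (by simp) (by simp [hab])

theorem IsGeoConvex.inl_mem_of_inl_mem_of_inr_mem (hS : IsGeoConvex (compPrism T) S) {a b : V}
    (ha : .inl a ∈ S) (hb : .inr b ∈ S) (hab : T.Adj a b) : .inl b ∈ S :=
  hS.mem_of_adj_of_adj ha hb (by simpa using hab) (by simp) (by simp) (by simp [hab.ne])

theorem IsGeoConvex.mem_of_neighborSet_eq_singleton (hS : IsGeoConvex (compPrism T) S)
    {x y z v : V} (hxy : x ≠ y) (hz : T.neighborSet z = {x}) (hv : T.neighborSet v = {y})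
    (hvx : v ≠ x) (hX : .inl x ∈ S) (hY : .inr y ∈ S) (hV : .inr v ∈ S) :
    .inl z ∈ S ∧ .inr z ∈ S := by
  have hzx : T.Adj z x := adj_of_neighborSet_eq_singleton hz
  have hvy : T.Adj v y := adj_of_neighborSet_eq_singleton hv
  have hzv : z ≠ v := fun h ↦ hxy (eq_of_adj_of_neighborSet_eq_singleton hv (h ▸ hzx))
  have hzy : z ≠ y := fun h ↦ hvx (eq_of_adj_of_neighborSet_eq_singleton (h ▸ hz) hvy.symm)
  have hnyz : ¬T.Adj y z := fun h ↦ hxy (eq_of_adj_of_neighborSet_eq_singleton hz h.symm).symm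
  have hnzv : ¬T.Adj z v := fun h ↦ hvx (eq_of_adj_of_neighborSet_eq_singleton hz h)
  have hZ : .inr z ∈ S := hS.mem_of_adj_of_adj hY hV (by simp [hzy.symm, hnyz])
    (by simp [hzv, hnzv]) (by simp [hvy.ne']) (by simp [hvy.symm])
  exact ⟨hS.inl_mem_of_inl_mem_of_inr_mem hX hZ hzx.symm, hZ⟩

end Prism

namespace SimpleGraph.IsDoubleStar

variable {V : Type*} {T : SimpleGraph V} {x y : V} {S : Set (V ⊕ V)}

theorem eq_univ_of_isGeoConvex (hT : T.IsDoubleStar x y) (hS : IsGeoConvex (compPrism T) S)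
    {u v : V} (hu : T.neighborSet u = {x}) (huy : u ≠ y) (hv : T.neighborSet v = {y})
    (hvx : v ≠ x) (hU : .inl u ∈ S) (hV : .inl v ∈ S) : S = Set.univ := by
  have hxy : x ≠ y := hT.1.ne
  have hux : T.Adj u x := adj_of_neighborSet_eq_singleton hu
  have hvy : T.Adj v y := adj_of_neighborSet_eq_singleton hv
  have huv : u ≠ v := fun h ↦ hxy (eq_of_adj_of_neighborSet_eq_singleton hv (h ▸ hux))
  have hnuv : ¬T.Adj u v := fun h ↦ hvx (eq_of_adj_of_neighborSet_eq_singleton hu h)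
  have hnxv : ¬T.Adj x v := fun h ↦ hxy (eq_of_adj_of_neighborSet_eq_singleton hv h.symm)
  have hnyu : ¬T.Adj y u := fun h ↦ hxy (eq_of_adj_of_neighborSet_eq_singleton hu h.symm).symm
  have hcommon : (compPrism T).commonNeighbors (.inl u) (.inl v) = ∅ := by
    ext (w | w)
    · simp only [mem_commonNeighbors, compPrism_adj_inl_inl, Set.mem_empty_iff_false, iff_false]
      rintro ⟨huw, hvw⟩
      exact hnxv (eq_of_adj_of_neighborSet_eq_singleton hu huw ▸ hvw.symm)
    · simp only [mem_commonNeighbors, compPrism_adj_inl_inr, Set.mem_empty_iff_false, iff_false]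
      rintro ⟨rfl, rfl⟩
      exact huv rfl
  obtain ⟨hX, hY⟩ := hS.mem_of_adj_of_adj_of_adj hU hV (c := .inl x) (d := .inl y)
    (by simpa using hux) (by simpa using hT.1) (by simpa using hvy.symm)
    (by simpa using huv) (by simpa using hnuv) hcommon
  obtain ⟨hU', hV'⟩ := hS.mem_of_adj_of_adj_of_adj hU hV (c := .inr u) (d := .inr v)
    (by simp) (by simpa using ⟨huv, hnuv⟩) (by simp) (by simpa using huv) (by simpa using hnuv)
    hcommon
  have hX' : .inr x ∈ S := hS.inr_mem_of_inl_mem_of_inr_mem hX hV' hvx.symm hnxv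
  have hY' : .inr y ∈ S := hS.inr_mem_of_inl_mem_of_inr_mem hY hU' huy.symm hnyu
  have hleafx {z : V} (hz : T.neighborSet z = {x}) :=
    hS.mem_of_neighborSet_eq_singleton hxy hz hv hvx hX hY' hV'
  have hleafy {z : V} (hz : T.neighborSet z = {y}) :=
    hS.mem_of_neighborSet_eq_singleton hxy.symm hz hu huy hY hX' hU'
  refine Set.eq_univ_of_forall fun w ↦ ?_
  rcases w with z | z <;> rcases hT.2 z with rfl | rfl | hz | hz
  exacts [hX, hY, (hleafx hz).1, (hleafy hz).1, hX', hY', (hleafx hz).2, (hleafy hz).2]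

theorem neighborSet_eq_singleton_of_notMem (hT : T.IsDoubleStar x y) {a : V}
    (ha : a ∉ insert x (T.neighborSet x)) : T.neighborSet a = {y} ∧ a ≠ x := by
  simp only [Set.mem_insert_iff, mem_neighborSet, not_or] at ha
  rcases hT.2 a with rfl | rfl | h | h
  · exact absurd rfl ha.1
  · exact absurd hT.1 ha.2
  · exact absurd (adj_of_neighborSet_eq_singleton h).symm ha.2
  · exact ⟨h, ha.1⟩

theorem subset_or_subset_of_isGeoConvex (hT : T.IsDoubleStar x y)
    (hS : IsGeoConvex (compPrism T) S) (hSp : S ≠ Set.univ) :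
    {a | .inl a ∈ S} ⊆ insert x (T.neighborSet x) ∨
      {a | .inl a ∈ S} ⊆ insert y (T.neighborSet y) := by
  by_contra! h
  obtain ⟨⟨v, hV, hv⟩, ⟨u, hU, hu⟩⟩ := And.intro (Set.not_subset.mp h.1) (Set.not_subset.mp h.2)
  obtain ⟨hv, hvx⟩ := hT.neighborSet_eq_singleton_of_notMem hv
  obtain ⟨hu, huy⟩ := hT.symm.neighborSet_eq_singleton_of_notMem hu
  exact hSp (hT.eq_univ_of_isGeoConvex hS hu huy hv hvx hU hV)

end SimpleGraph.IsDoubleStar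

section Finite

variable {V : Type*} [Finite V] (H : SimpleGraph V)

theorem dist_le_graphDiam (u v : V) : H.dist u v ≤ graphDiam H := by
  have hbdd : BddAbove {d | ∃ u v : V, H.dist u v = d} :=
    ((Set.finite_range fun p : V × V ↦ H.dist p.1 p.2).subset
      (by rintro _ ⟨u, v, rfl⟩; exact ⟨(u, v), rfl⟩)).bddAbove
  exact le_csSup hbdd ⟨u, v, rfl⟩

theorem vdeg_le_maxDeg (v : V) : vdeg H v ≤ maxDeg H :=
  le_csSup (Set.finite_range (vdeg H)).bddAbove ⟨v, rfl⟩

theorem ncard_le_maxDeg_add_one {s : Set V} {c : V} (hs : s ⊆ insert c (H.neighborSet c)) :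
    s.ncard ≤ maxDeg H + 1 :=
  calc s.ncard ≤ (insert c (H.neighborSet c)).ncard := Set.ncard_le_ncard hs
    _ ≤ vdeg H c + 1 := Set.ncard_insert_le _ _
    _ ≤ maxDeg H + 1 := by gcongr; exact vdeg_le_maxDeg H c

end Finite

theorem stmt18_general {V : Type*} [Fintype V] (T : SimpleGraph V) (hT : T.IsTree)
    (hd : graphDiam T = 3) (x y : V) (hxy : T.Adj x y)
    (hx : 2 ≤ vdeg T x) (hy : 2 ≤ vdeg T y)
    (S : Set (V ⊕ V)) (hS : IsGeoConvex (compPrism T) S) (hSp : S ≠ Set.univ) :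
    ({a : V | Sum.inl a ∈ S} ⊆ insert x (T.neighborSet x) ∨
      {a : V | Sum.inl a ∈ S} ⊆ insert y (T.neighborSet y)) ∧
    {a : V | Sum.inl a ∈ S}.ncard ≤ maxDeg T + 1 := by
  have hdist (a b : V) : T.dist a b ≤ 3 := hd ▸ dist_le_graphDiam T a b
  obtain ⟨x', hxx', hx'y⟩ := Set.exists_ne_of_one_lt_ncard hx y
  obtain ⟨y', hyy', hy'x⟩ := Set.exists_ne_of_one_lt_ncard hy x
  have hstar := hT.isDoubleStar hdist hxy hxx' hx'y hyy' hy'x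
  have hsub := hstar.subset_or_subset_of_isGeoConvex hS hSp
  exact ⟨hsub, hsub.elim (ncard_le_maxDeg_add_one T) (ncard_le_maxDeg_add_one T)⟩

theorem stmt18 {V : Type*} [Fintype V] (T : SimpleGraph V) (hT : T.IsTree)
    (hd : graphDiam T = 3) (x y : V) (hxy : T.Adj x y)
    (hx : 2 ≤ vdeg T x) (hy : 2 ≤ vdeg T y)
    (S : Set (V ⊕ V)) (hS : IsGeoConvex (compPrism T) S) (hSp : S ≠ Set.univ)
    (hM : ∃ a : V, Sum.inl a ∈ S) (hN : ∃ a : V, Sum.inr a ∈ S) :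
    ({a : V | Sum.inl a ∈ S} ⊆ insert x (T.neighborSet x) ∨
      {a : V | Sum.inl a ∈ S} ⊆ insert y (T.neighborSet y)) ∧
    {a : V | Sum.inl a ∈ S}.ncard ≤ maxDeg T + 1 :=
  stmt18_general T hT hd x y hxy hx hy S hS hSp
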